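/- arXiv:math/0105177 — 5 statements merged into one kernel-verified Lean document; each statement's English description precedes it below -/
import Mathlib

section
/- Let F be a free group, R a normal subgroup of F, and G = F/R. Then the natural sequence 0 → H₂(G,ℤ) → R/[F,R] → Fᵃᵇ → Gᵃᵇ → 0 is exact; concretely: the map Fᵃᵇ → Gᵃᵇ induced by the projection F → G is surjective, its kernel equals the image of the map R/[F,R] → Fᵃᵇ induced by the inclusion R ↪ F, and the kernel of R/[F,R] → Fᵃᵇ is isomorphic to the second group homology H₂(G,ℤ) of G with trivial coefficients ℤ. -/
/-- Second boundary map `ℤ[G²] → ℤ[G]` of the bar complex computing the homology of `G`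
with trivial coefficients `ℤ`: `d₂(g,h) = [h] - [gh] + [g]`. -/
noncomputable def barD2 (G : Type*) [Group G] : ((G × G) →₀ ℤ) →ₗ[ℤ] (G →₀ ℤ) :=
  Finsupp.lift (G →₀ ℤ) ℤ (G × G) fun p =>
    Finsupp.single p.2 1 - Finsupp.single (p.1 * p.2) 1 + Finsupp.single p.1 1

/-- Third boundary map `ℤ[G³] → ℤ[G²]` of the bar complex:
`d₃(g,h,k) = (h,k) - (gh,k) + (g,hk) - (g,h)`. -/
noncomputable def barD3 (G : Type*) [Group G] : ((G × G × G) →₀ ℤ) →ₗ[ℤ] ((G × G) →₀ ℤ) :=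
  Finsupp.lift ((G × G) →₀ ℤ) ℤ (G × G × G) fun t =>
    Finsupp.single (t.2.1, t.2.2) 1 - Finsupp.single (t.1 * t.2.1, t.2.2) 1 +
      Finsupp.single (t.1, t.2.1 * t.2.2) 1 - Finsupp.single (t.1, t.2.1) 1

/-- The second group homology `H₂(G, ℤ)` of `G` with trivial coefficients `ℤ`,
defined as `ker d₂ / im d₃` in the bar complex (since `im d₃ ⊆ ker d₂`, this is the
quotient of `ker d₂` by the pullback of `range d₃`). -/
noncomputable abbrev H2 (G : Type*) [Group G] :=
  LinearMap.ker (barD2 G) ⧸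
    (LinearMap.range (barD3 G)).comap (LinearMap.ker (barD2 G)).subtype

/-!
Fix a section `sec` of `F → G` with `sec 1 = 1`. The map `x ↦ x · sec(x̄)⁻¹` into `R/[F,R]` is a
homomorphism twisted by the 2-cocycle `c(g, h) = sec g · sec h · sec(gh)⁻¹`, so `c` extended
linearly to bar 2-chains kills boundaries. Modulo `[F,F]` the cocycle is the coboundary of
`g ↦ sec g`, so cycles land in `ker ψ`; conversely every element of `R ∩ [F,F]` is reached by
induction over products of commutators. For injectivity we use that `F` is free: `F → G` lifts to
the central extension of `G` by `ℤ[G²]/im d₃` given by the universal cocycle `[g|h]`, and the lift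
induces a map `R/[F,R] → ℤ[G²]/im d₃` that undoes `c` on cycles.
-/

open Finsupp

@[simp]
lemma barD2_single {G : Type*} [Group G] (g h : G) :
    barD2 G (single (g, h) 1) = single h 1 - single (g * h) 1 + single g 1 := by
  simp [barD2]

@[simp]
lemma barD3_single {G : Type*} [Group G] (g h k : G) :
    barD3 G (single (g, h, k) 1) =
      single (h, k) 1 - single (g * h, k) 1 + single (g, h * k) 1 - single (g, h) 1 := by
  simp [barD3]

section TwoCochain

variable {G A B : Type*} [AddCommGroup A] [AddCommGroup B]

noncomputable def evalTwoCochain (σ : G → G → A) : (G × G →₀ ℤ) →ₗ[ℤ] A :=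
  Finsupp.lift A ℤ (G × G) fun p => σ p.1 p.2

@[simp]
lemma evalTwoCochain_single (σ : G → G → A) (g h : G) :
    evalTwoCochain σ (single (g, h) 1) = σ g h := by
  simp [evalTwoCochain]

lemma twoChain_hom_ext {φ φ' : (G × G →₀ ℤ) →ₗ[ℤ] B}
    (h : ∀ g h : G, φ (single (g, h) 1) = φ' (single (g, h) 1)) : φ = φ' :=
  Finsupp.lhom_ext' fun p => LinearMap.ext_ring (h p.1 p.2)

lemma comp_evalTwoCochain (f : A →+ B) (σ : G → G → A) :
    f.toIntLinearMap ∘ₗ evalTwoCochain σ = evalTwoCochain fun g h => f (σ g h) :=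
  twoChain_hom_ext fun g h => by simp

lemma evalTwoCochain_zero : evalTwoCochain (0 : G → G → A) = 0 :=
  twoChain_hom_ext fun g h => by simp

lemma evalTwoCochain_add (σ τ : G → G → A) :
    evalTwoCochain (σ + τ) = evalTwoCochain σ + evalTwoCochain τ :=
  twoChain_hom_ext fun g h => by simp

variable [Group G]

lemma evalTwoCochain_coboundary (β : G → A) :
    evalTwoCochain (fun g h => β g + β h - β (g * h)) = Finsupp.lift A ℤ G β ∘ₗ barD2 G :=
  twoChain_hom_ext fun g h => by
    simp only [evalTwoCochain_single, LinearMap.comp_apply, barD2_single, map_add, map_sub,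
      lift_apply, zero_smul, sum_single_index, one_smul]
    abel

def IsTwoCocycle (σ : G → G → A) : Prop :=
  ∀ g h k, σ g h + σ (g * h) k = σ h k + σ g (h * k)

namespace IsTwoCocycle

variable {σ : G → G → A}

lemma apply_one_right (hσ : IsTwoCocycle σ) (g : G) : σ g 1 = σ 1 1 := by
  simpa using hσ g 1 1

lemma apply_one_left (hσ : IsTwoCocycle σ) (g : G) : σ 1 g = σ 1 1 := by
  simpa using (hσ 1 1 g).symm

lemma apply_inv_right (hσ : IsTwoCocycle σ) (g : G) : σ g g⁻¹ = σ g⁻¹ g := by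
  have := hσ g g⁻¹ g
  rwa [mul_inv_cancel, inv_mul_cancel, hσ.apply_one_left g, hσ.apply_one_right g,
    add_left_inj] at this

lemma evalTwoCochain_comp_barD3 (hσ : IsTwoCocycle σ) : evalTwoCochain σ ∘ₗ barD3 G = 0 :=
  Finsupp.lhom_ext' fun ⟨g, h, k⟩ => LinearMap.ext_ring <| by
    have := hσ g h k
    rw [eq_comm, ← sub_eq_zero] at this
    simp only [LinearMap.comp_apply, lsingle_apply, barD3_single, map_add, map_sub,
      evalTwoCochain_single, LinearMap.zero_apply, ← this]
    abel

end IsTwoCocycle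

variable (G) in
noncomputable def barCocycle (g h : G) : (G × G →₀ ℤ) ⧸ LinearMap.range (barD3 G) :=
  Submodule.Quotient.mk (single (g, h) 1)

lemma isTwoCocycle_barCocycle : IsTwoCocycle (barCocycle G) := fun g h k => by
  rw [← sub_eq_zero]
  simp only [barCocycle, ← Submodule.Quotient.mk_add, ← Submodule.Quotient.mk_sub,
    Submodule.Quotient.mk_eq_zero]
  exact ⟨-single (g, h, k) 1, by rw [map_neg, barD3_single]; abel⟩

lemma evalTwoCochain_barCocycle :
    evalTwoCochain (barCocycle G) = (LinearMap.range (barD3 G)).mkQ :=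
  twoChain_hom_ext fun g h => by simp [barCocycle]

end TwoCochain

@[ext]
structure CocycleExtension {G A : Type*} (σ : G → G → A) where
  fst : G
  snd : A

namespace CocycleExtension

variable {G A : Type*} [Group G] [AddCommGroup A] (σ : G → G → A)

instance : Mul (CocycleExtension σ) := ⟨fun x y => ⟨x.fst * y.fst, x.snd + y.snd + σ x.fst y.fst⟩⟩
instance : One (CocycleExtension σ) := ⟨⟨1, -σ 1 1⟩⟩
instance : Inv (CocycleExtension σ) := ⟨fun x => ⟨x.fst⁻¹, -x.snd - σ x.fst x.fst⁻¹ - σ 1 1⟩⟩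

variable {σ} (x y : CocycleExtension σ)

@[simp] lemma fst_mul : (x * y).fst = x.fst * y.fst := rfl
@[simp] lemma snd_mul : (x * y).snd = x.snd + y.snd + σ x.fst y.fst := rfl
@[simp] lemma fst_one : (1 : CocycleExtension σ).fst = 1 := rfl
@[simp] lemma snd_one : (1 : CocycleExtension σ).snd = -σ 1 1 := rfl
@[simp] lemma fst_inv : x⁻¹.fst = x.fst⁻¹ := rfl
@[simp] lemma snd_inv : x⁻¹.snd = -x.snd - σ x.fst x.fst⁻¹ - σ 1 1 := rfl

variable (σ) [hσ : Fact (IsTwoCocycle σ)]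

instance : Group (CocycleExtension σ) where
  mul_assoc x y z := by
    ext
    · exact mul_assoc ..
    · simp only [snd_mul, fst_mul]
      linear_combination (norm := abel) hσ.out x.fst y.fst z.fst
  one_mul x := by
    ext
    · exact one_mul _
    · simp only [snd_mul, snd_one, fst_one]
      linear_combination (norm := abel) hσ.out.apply_one_left x.fst
  mul_one x := by
    ext
    · exact mul_one _
    · simp only [snd_mul, snd_one, fst_one]
      linear_combination (norm := abel) hσ.out.apply_one_right x.fst
  inv_mul_cancel x := by
    ext
    · exact inv_mul_cancel _
    · simp only [snd_mul, snd_one, snd_inv, fst_inv]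
      linear_combination (norm := abel) -hσ.out.apply_inv_right x.fst

def fstHom : CocycleExtension σ →* G where
  toFun := fst
  map_one' := rfl
  map_mul' _ _ := rfl

end CocycleExtension

section TwistedHom

variable {F G A : Type*} [Group F] [Group G] [AddCommGroup A]

/-- Equivalently, `x ↦ ⟨π x, l x⟩ : F → CocycleExtension σ` is a homomorphism. -/
def IsTwistedHom (π : F →* G) (σ : G → G → A) (l : F → A) : Prop :=
  ∀ x y, l (x * y) = l x + l y + σ (π x) (π y)

namespace IsTwistedHom

variable {π : F →* G} {σ : G → G → A} {l : F → A}

lemma map_one (hl : IsTwistedHom π σ l) : l 1 = -σ 1 1 := by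
  have := hl 1 1
  rw [mul_one, π.map_one] at this
  linear_combination (norm := abel) -this

lemma twist_apply_one_right (hl : IsTwistedHom π σ l) (x : F) : σ (π x) 1 = -l 1 := by
  have := hl x 1
  rw [mul_one, π.map_one] at this
  linear_combination (norm := abel) -this

lemma twist_apply_one_left (hl : IsTwistedHom π σ l) (x : F) : σ 1 (π x) = -l 1 := by
  have := hl 1 x
  rw [one_mul, π.map_one] at this
  linear_combination (norm := abel) -this

lemma map_inv (hl : IsTwistedHom π σ l) (x : F) : l x⁻¹ = l 1 - l x - σ (π x) (π x)⁻¹ := by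
  have := hl x x⁻¹
  rw [mul_inv_cancel, π.map_inv] at this
  linear_combination (norm := abel) -this

lemma map_mul_of_map_eq_one_right (hl : IsTwistedHom π σ l) {r : F} (hr : π r = 1) (x : F) :
    l (x * r) = l x + l r - l 1 := by
  rw [hl, hr, hl.twist_apply_one_right, sub_eq_add_neg]

lemma map_mul_of_map_eq_one_left (hl : IsTwistedHom π σ l) {r : F} (hr : π r = 1) (x : F) :
    l (r * x) = l r + l x - l 1 := by
  rw [hl, hr, hl.twist_apply_one_left, sub_eq_add_neg]

lemma map_conj (hl : IsTwistedHom π σ l) {r : F} (hr : π r = 1) (f : F) :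
    l (f * r * f⁻¹) = l r := by
  have hconj : π (f * r * f⁻¹) = 1 := by simp [hr]
  have := hl.map_mul_of_map_eq_one_left hconj f
  rw [inv_mul_cancel_right, hl.map_mul_of_map_eq_one_right hr] at this
  linear_combination (norm := abel) -this

lemma map_mul_inv_of_map_eq (hl : IsTwistedHom π σ l) {x y : F} (h : π x = π y) :
    l (x * y⁻¹) = l x - l y + l 1 := by
  have hxy : π (x * y⁻¹) = 1 := by simp [h]
  have := hl.map_mul_of_map_eq_one_left hxy y
  rw [inv_mul_cancel_right] at this
  linear_combination (norm := abel) -this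

/-- The cocycle identity is associativity of `F`, read through `l`. -/
lemma isTwoCocycle (hl : IsTwistedHom π σ l) (hπ : Function.Surjective π) : IsTwoCocycle σ := by
  intro g h k
  obtain ⟨x, rfl⟩ := hπ g
  obtain ⟨y, rfl⟩ := hπ h
  obtain ⟨z, rfl⟩ := hπ k
  have := congrArg l (mul_assoc x y z)
  rw [hl (x * y) z, hl x y, hl x (y * z), hl y z, π.map_mul, π.map_mul] at this
  linear_combination (norm := abel) this

lemma exists_barD2_eq_of_mem_commutator (hl : IsTwistedHom π σ l) {x : F} (hx : x ∈ commutator F) :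
    ∃ z, barD2 G z = single 1 1 - single (π x) 1 ∧ evalTwoCochain σ z = l x - l 1 := by
  rw [commutator_eq_closure] at hx
  induction hx using Subgroup.closure_induction with
  | mem _ hw =>
    obtain ⟨a, b, rfl⟩ := hw
    set g := π a
    set h := π b
    -- one 2-cell per product in `a * b * a⁻¹ * b⁻¹`, corrected by `[g|g⁻¹]`, `[h|h⁻¹]` for the
    -- inverses and by `[1|1]` for `l 1`
    refine ⟨single (g, h) 1 + single (g * h, g⁻¹) 1 + single (g * h * g⁻¹, h⁻¹) 1
      - single (g, g⁻¹) 1 - single (h, h⁻¹) 1 - single (1, 1) 1, ?_, ?_⟩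
    · simp only [map_add, map_sub, barD2_single, commutatorElement_def, π.map_mul, π.map_inv,
        mul_inv_cancel, mul_one, sub_self, zero_add]
      abel
    · rw [commutatorElement_def, hl, hl, hl, hl.map_inv a, hl.map_inv b, hl.map_one]
      simp only [map_add, map_sub, evalTwoCochain_single, π.map_mul, π.map_inv]
      abel
  | one => exact ⟨0, by simp, by simp⟩
  | mul x y _ _ hx hy =>
    obtain ⟨zx, hx₂, hx₀⟩ := hx
    obtain ⟨zy, hy₂, hy₀⟩ := hy
    refine ⟨zx + zy + single (π x, π y) 1 - single (1, 1) 1, ?_, ?_⟩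
    · simp only [map_add, map_sub, barD2_single, hx₂, hy₂, π.map_mul, mul_one]
      abel
    · simp only [map_add, map_sub, evalTwoCochain_single, hx₀, hy₀, hl x y, hl.map_one]
      abel
  | inv x _ hx =>
    obtain ⟨zx, hx₂, hx₀⟩ := hx
    refine ⟨single (1, 1) 1 - single (π x, (π x)⁻¹) 1 - zx, ?_, ?_⟩
    · simp only [map_sub, barD2_single, hx₂, π.map_inv, mul_inv_cancel, mul_one]
      abel
    · simp only [map_sub, evalTwoCochain_single, hx₀, hl.map_inv x, hl.map_one]
      abel

end IsTwistedHom

end TwistedHom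

theorem IsFreeGroup.exists_isTwistedHom {F G A : Type*} [Group F] [IsFreeGroup F] [Group G]
    [AddCommGroup A] (π : F →* G) {σ : G → G → A} (hσ : IsTwoCocycle σ) :
    ∃ l : F → A, IsTwistedHom π σ l := by
  have : Fact (IsTwoCocycle σ) := ⟨hσ⟩
  let Φ : F →* CocycleExtension σ := IsFreeGroup.lift fun b => ⟨π (IsFreeGroup.of b), 0⟩
  have hΦ : (CocycleExtension.fstHom σ).comp Φ = π :=
    IsFreeGroup.ext_hom fun b => by simp [Φ, CocycleExtension.fstHom]
  have hfst (x : F) : (Φ x).fst = π x := DFunLike.congr_fun hΦ x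
  exact ⟨fun x => (Φ x).snd, fun x y => by
    dsimp only
    rw [map_mul, CocycleExtension.snd_mul, hfst, hfst]⟩

section QuotTopCommutator

variable {F : Type*} [Group F] (R : Subgroup F)

abbrev Subgroup.QuotTopCommutator : Type _ := ↥R ⧸ ⁅(⊤ : Subgroup F), R⁆.subgroupOf R

lemma Subgroup.QuotTopCommutator.mk_conj (f : F) (r : R) (h : f * r * f⁻¹ ∈ R) :
    (QuotientGroup.mk ⟨f * r * f⁻¹, h⟩ : R.QuotTopCommutator) = QuotientGroup.mk r := by
  rw [QuotientGroup.eq, Subgroup.mem_subgroupOf]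
  convert Subgroup.commutator_mem_commutator (Subgroup.mem_top f) (R.inv_mem r.2) using 1
  push_cast
  group

instance [R.Normal] : CommGroup R.QuotTopCommutator where
  mul_comm a b := by
    induction a using QuotientGroup.induction_on with | _ r => ?_
    induction b using QuotientGroup.induction_on with | _ r' => ?_
    rw [← QuotientGroup.mk_mul, ← QuotientGroup.mk_mul, QuotientGroup.eq, Subgroup.mem_subgroupOf]
    convert Subgroup.commutator_mem_commutator (Subgroup.mem_top (r' : F)⁻¹) (R.inv_mem r.2)
      using 1
    push_cast
    group

end QuotTopCommutator

namespace IsTwistedHom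

variable {F G A : Type*} [Group F] [Group G] [AddCommGroup A]
variable {π : F →* G} {σ : G → G → A} {l : F → A}

def restrictHom (hl : IsTwistedHom π σ l) (R : Subgroup F) (hR : R ≤ π.ker) :
    R →* Multiplicative A where
  toFun r := Multiplicative.ofAdd (l r - l 1)
  map_one' := by simp
  map_mul' r r' := by
    rw [← ofAdd_add, Subgroup.coe_mul, hl.map_mul_of_map_eq_one_right (hR r'.2)]
    abel_nf

lemma subgroupOf_le_ker_restrictHom (hl : IsTwistedHom π σ l) (R : Subgroup F) [R.Normal]
    (hR : R ≤ π.ker) : ⁅(⊤ : Subgroup F), R⁆.subgroupOf R ≤ (hl.restrictHom R hR).ker := by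
  have hle : ⁅(⊤ : Subgroup F), R⁆ ≤ (hl.restrictHom R hR).ker.map R.subtype := by
    rw [Subgroup.commutator_le]
    intro f _ r hr
    have hconj : f * r * f⁻¹ ∈ R := ‹R.Normal›.conj_mem r hr f
    refine ⟨⟨f * r * f⁻¹, hconj⟩ * ⟨r, hr⟩⁻¹, ?_, rfl⟩
    rw [SetLike.mem_coe, MonoidHom.mem_ker, map_mul, _root_.map_inv, mul_inv_eq_one]
    exact congrArg (fun x => Multiplicative.ofAdd (x - l 1)) (hl.map_conj (hR hr) f)
  exact (Subgroup.comap_mono hle).trans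
    (Subgroup.comap_map_eq_self_of_injective R.subtype_injective _).le

noncomputable def kerHom (hl : IsTwistedHom π σ l) (R : Subgroup F) [R.Normal]
    (hR : R ≤ π.ker) : Additive R.QuotTopCommutator →+ A :=
  MonoidHom.toAdditiveLeft <|
    QuotientGroup.lift _ (hl.restrictHom R hR) (hl.subgroupOf_le_ker_restrictHom R hR)

lemma kerHom_mk (hl : IsTwistedHom π σ l) (R : Subgroup F) [R.Normal] (hR : R ≤ π.ker) (r : R) :
    hl.kerHom R hR (Additive.ofMul (QuotientGroup.mk r)) = l r - l 1 :=
  rfl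

end IsTwistedHom

namespace Abelianization

variable {G H : Type*} [Group G] [Group H] {f : G →* H}

lemma map_surjective (hf : Function.Surjective f) : Function.Surjective (map f) := by
  intro y
  obtain ⟨h, rfl⟩ := QuotientGroup.mk_surjective y
  obtain ⟨g, rfl⟩ := hf h
  exact ⟨of g, map_of f g⟩

lemma ker_map_of_surjective (hf : Function.Surjective f) : (map f).ker = f.ker.map of := by
  refine le_antisymm (fun x hx => ?_) ?_
  · obtain ⟨g, rfl⟩ := QuotientGroup.mk_surjective x
    have hfg : f g ∈ commutator H := by
      rw [← ker_of]
      exact hx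
    rw [commutator_def, ← Subgroup.map_top_of_surjective f hf, ← Subgroup.map_commutator,
      ← commutator_def] at hfg
    obtain ⟨c, hc, hcg⟩ := hfg
    refine ⟨c⁻¹ * g, by simp [hcg], ?_⟩
    rw [← ker_of, SetLike.mem_coe, MonoidHom.mem_ker] at hc
    rw [map_mul, map_inv, hc, inv_one, one_mul]
    rfl
  · rintro _ ⟨g, hg, rfl⟩
    rw [MonoidHom.mem_ker, map_of, MonoidHom.mem_ker.1 hg, map_one]

end Abelianization

namespace Hopf

variable {F : Type*} [Group F] (R : Subgroup F) [R.Normal]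

open Classical in
noncomputable def sec (g : F ⧸ R) : F := if g = 1 then 1 else g.out

@[simp]
lemma mk_sec (g : F ⧸ R) : ((sec R g : F) : F ⧸ R) = g := by
  unfold sec
  split_ifs with h
  · rw [h, QuotientGroup.mk_one]
  · exact QuotientGroup.out_eq' g

@[simp]
lemma sec_one : sec R 1 = 1 := by simp [sec]

lemma mul_inv_sec_mem (x : F) : x * (sec R x)⁻¹ ∈ R := by
  rw [← QuotientGroup.eq_one_iff]
  simp

noncomputable def offset (x : F) : Additive R.QuotTopCommutator :=
  Additive.ofMul (QuotientGroup.mk ⟨x * (sec R x)⁻¹, mul_inv_sec_mem R x⟩)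

/-- The class of `sec g * sec h * (sec (g * h))⁻¹` in `R / [F, R]`. -/
noncomputable def cocycle (g h : F ⧸ R) : Additive R.QuotTopCommutator :=
  offset R (sec R g * sec R h)

lemma isTwistedHom_offset : IsTwistedHom (QuotientGroup.mk' R) (cocycle R) (offset R) := by
  intro x y
  let r : R := ⟨y * (sec R y)⁻¹, mul_inv_sec_mem R y⟩
  have hconj : sec R x * r * (sec R x)⁻¹ ∈ R := ‹R.Normal›.conj_mem _ r.2 _
  have hsplit : (⟨x * y * (sec R ↑(x * y))⁻¹, mul_inv_sec_mem R _⟩ : R) =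
      ⟨x * (sec R x)⁻¹, mul_inv_sec_mem R x⟩ * ⟨_, hconj⟩ *
        ⟨sec R x * sec R y * (sec R (sec R x * sec R y))⁻¹, mul_inv_sec_mem R _⟩ := by
    ext
    simp only [r, Subgroup.coe_mul, QuotientGroup.mk_mul, mk_sec]
    group
  rw [offset, hsplit, QuotientGroup.mk_mul, QuotientGroup.mk_mul,
    Subgroup.QuotTopCommutator.mk_conj]
  rfl

lemma offset_of_mem (r : R) : offset R r = Additive.ofMul (QuotientGroup.mk r) := by
  simp [offset, (QuotientGroup.eq_one_iff _).2 r.2]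

lemma comp_evalTwoCochain_cocycle {B : Type*} [AddCommGroup B]
    (f : Additive R.QuotTopCommutator →+ B) {τ : F ⧸ R → F ⧸ R → B} {k : F → B}
    (hk : IsTwistedHom (QuotientGroup.mk' R) τ k) (hf : ∀ x, f (offset R x) = k x - k (sec R x)) :
    f.toIntLinearMap ∘ₗ evalTwoCochain (cocycle R) =
      evalTwoCochain τ + Finsupp.lift B ℤ (F ⧸ R) (fun g => k (sec R g)) ∘ₗ barD2 (F ⧸ R) := by
  rw [← evalTwoCochain_coboundary, ← evalTwoCochain_add, comp_evalTwoCochain]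
  congr
  funext g h
  rw [cocycle, hf, hk, QuotientGroup.mk'_apply, QuotientGroup.mk'_apply, QuotientGroup.mk_mul,
    mk_sec, mk_sec, Pi.add_apply, Pi.add_apply]
  abel

lemma kerHom_offset {A : Type*} [AddCommGroup A] {σ : F ⧸ R → F ⧸ R → A} {l : F → A}
    (hl : IsTwistedHom (QuotientGroup.mk' R) σ l) (x : F) :
    hl.kerHom R (QuotientGroup.ker_mk' R).ge (offset R x) = l x - l (sec R x) := by
  rw [offset, IsTwistedHom.kerHom_mk, hl.map_mul_inv_of_map_eq (by simp)]
  abel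

lemma mem_range_barD3_of_evalTwoCochain_eq_zero [IsFreeGroup F]
    {z : (F ⧸ R) × (F ⧸ R) →₀ ℤ} (hz : barD2 (F ⧸ R) z = 0)
    (h0 : evalTwoCochain (cocycle R) z = 0) : z ∈ LinearMap.range (barD3 (F ⧸ R)) := by
  obtain ⟨l, hl⟩ := IsFreeGroup.exists_isTwistedHom (QuotientGroup.mk' R) isTwoCocycle_barCocycle
  have := LinearMap.congr_fun (comp_evalTwoCochain_cocycle R _ hl (kerHom_offset R hl)) z
  rw [evalTwoCochain_barCocycle] at this
  simp only [LinearMap.comp_apply, h0, map_zero, LinearMap.add_apply, hz, add_zero] at this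
  exact (Submodule.Quotient.mk_eq_zero _).1 this.symm

lemma evalTwoCochain_cocycle_mem_ker
    {ψ : R.QuotTopCommutator →* Abelianization F}
    (hψ : ∀ r : R, ψ (QuotientGroup.mk r) = Abelianization.of (r : F))
    {z : (F ⧸ R) × (F ⧸ R) →₀ ℤ} (hz : barD2 (F ⧸ R) z = 0) :
    evalTwoCochain (cocycle R) z ∈ ψ.toAdditive.ker := by
  let k : F → Additive (Abelianization F) := fun x => Additive.ofMul (Abelianization.of x)
  have hk : IsTwistedHom (QuotientGroup.mk' R) 0 k := fun x y => by simp [k]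
  have hf : ∀ x, ψ.toAdditive (offset R x) = k x - k (sec R x) := fun x => by
    simp only [offset, MonoidHom.toAdditive_apply_apply, toMul_ofMul, hψ, ← div_eq_mul_inv,
      map_div, ofMul_div, k]
  have := LinearMap.congr_fun (comp_evalTwoCochain_cocycle R _ hk hf) z
  rwa [evalTwoCochain_zero, zero_add, LinearMap.comp_apply, LinearMap.comp_apply, hz,
    map_zero] at this

lemma exists_evalTwoCochain_cocycle_eq (r : R) (hr : (r : F) ∈ commutator F) :
    ∃ z, barD2 (F ⧸ R) z = 0 ∧
      evalTwoCochain (cocycle R) z = Additive.ofMul (QuotientGroup.mk r) := by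
  obtain ⟨z, hz₂, hz⟩ := (isTwistedHom_offset R).exists_barD2_eq_of_mem_commutator hr
  refine ⟨z, ?_, ?_⟩
  · rw [hz₂, QuotientGroup.mk'_apply, (QuotientGroup.eq_one_iff _).2 r.2, sub_self]
  · rw [hz, offset_of_mem, ← R.coe_one, offset_of_mem]
    simp

lemma range_eq_map_of {ψ : R.QuotTopCommutator →* Abelianization F}
    (hψ : ∀ r : R, ψ (QuotientGroup.mk r) = Abelianization.of (r : F)) :
    ψ.range = R.map Abelianization.of := by
  have hcomp : ψ.comp (QuotientGroup.mk' _) = Abelianization.of.comp R.subtype := MonoidHom.ext hψ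
  calc ψ.range = (ψ.comp (QuotientGroup.mk' _)).range := by
        rw [MonoidHom.range_comp, MonoidHom.range_eq_top.2 (QuotientGroup.mk'_surjective _),
          ← MonoidHom.range_eq_map]
    _ = R.map Abelianization.of := by rw [hcomp, MonoidHom.range_comp, R.range_subtype]

theorem nonempty_addEquiv_ker_H2 [IsFreeGroup F] {ψ : R.QuotTopCommutator →* Abelianization F}
    (hψ : ∀ r : R, ψ (QuotientGroup.mk r) = Abelianization.of (r : F)) :
    Nonempty (Additive ψ.ker ≃+ H2 (F ⧸ R)) := by
  let Z := LinearMap.ker (barD2 (F ⧸ R))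
  let φ : Z →ₗ[ℤ] Additive R.QuotTopCommutator := evalTwoCochain (cocycle R) ∘ₗ Z.subtype
  have hker : (LinearMap.range (barD3 (F ⧸ R))).comap Z.subtype = LinearMap.ker φ := by
    ext ⟨z, hz⟩
    refine ⟨?_, mem_range_barD3_of_evalTwoCochain_eq_zero R hz⟩
    rintro ⟨w, rfl⟩
    exact LinearMap.congr_fun ((isTwistedHom_offset R).isTwoCocycle
      (QuotientGroup.mk'_surjective R)).evalTwoCochain_comp_barD3 w
  have hrange : (LinearMap.range φ).toAddSubgroup = ψ.toAdditive.ker := by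
    ext y
    refine ⟨?_, fun hy => ?_⟩
    · rintro ⟨⟨z, hz⟩, rfl⟩
      exact evalTwoCochain_cocycle_mem_ker R hψ hz
    obtain ⟨r, hr⟩ := QuotientGroup.mk_surjective (Additive.toMul y)
    have hr' : (r : F) ∈ commutator F := by
      rw [← Abelianization.ker_of, MonoidHom.mem_ker, ← hψ, hr]
      exact hy
    obtain ⟨z, hz, hφ⟩ := exists_evalTwoCochain_cocycle_eq R r hr'
    exact ⟨⟨z, hz⟩, hφ.trans (congrArg Additive.ofMul hr)⟩
  exact ⟨((((Submodule.quotEquivOfEq _ _ hker).trans φ.quotKerEquivRange).toAddEquiv.trans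
    (AddEquiv.addSubgroupCongr hrange)).trans (AddEquiv.refl _)).symm⟩

end Hopf

/-- **Hopf's exact sequence.** Let `F` be a free group, `R` a normal subgroup of `F`,
`G = F/R`, and let `ψ : R/[F,R] → Fᵃᵇ` be the map induced by the inclusion `R ↪ F`.
Then the sequence `0 → H₂(G,ℤ) → R/[F,R] → Fᵃᵇ → Gᵃᵇ → 0` is exact: the induced map
`Fᵃᵇ → Gᵃᵇ` is surjective with kernel equal to the range of `ψ`, and the kernel
of `ψ` is isomorphic to `H₂(G, ℤ)`. -/
theorem hopf_exact_sequence {F : Type*} [Group F] [IsFreeGroup F] (R : Subgroup F)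
    [R.Normal]
    (ψ : (↥R ⧸ (⁅(⊤ : Subgroup F), R⁆.subgroupOf R)) →* Abelianization F)
    (hψ : ∀ r : ↥R, ψ (QuotientGroup.mk r) = Abelianization.of (r : F)) :
    Function.Surjective (Abelianization.map (QuotientGroup.mk' R)) ∧
    (Abelianization.map (QuotientGroup.mk' R)).ker = ψ.range ∧
    Nonempty (Additive ↥ψ.ker ≃+ H2 (F ⧸ R)) := by
  have hπ := QuotientGroup.mk'_surjective R
  refine ⟨Abelianization.map_surjective hπ, ?_, Hopf.nonempty_addEquiv_ker_H2 R hψ⟩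
  rw [Abelianization.ker_map_of_surjective hπ, QuotientGroup.ker_mk', Hopf.range_eq_map_of R hψ]
end

section
/- Let F be a group, R₀ a subgroup of F, and R the normal closure of R₀ in F (the smallest normal subgroup of F containing R₀). Then the natural homomorphism R₀ → R/[F,R] (sending r₀ to its coset r₀[F,R]) is surjective and has kernel R₀ ∩ [F,R]; consequently R₀/(R₀ ∩ [F,R]) is isomorphic to R/[F,R]. -/
/-! Every conjugate `g a g⁻¹ = ⁅g, a⁆ * a` of an element `a ∈ R₀` lies in `[F,R] R₀`, so
`R = R₀ [F,R]` and `R₀` already meets every coset of `[F,R]` in `R`. The kernel of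
`R₀ → R/[F,R]` is `R₀ ∩ [F,R]` by definition of the quotient, and the first isomorphism
theorem finishes. -/

open scoped commutatorElement

namespace Subgroup

variable {F : Type*} [Group F]

theorem normalClosure_le_sup_commutator (H : Subgroup F) :
    normalClosure (H : Set F) ≤ H ⊔ ⁅(⊤ : Subgroup F), normalClosure (H : Set F)⁆ := by
  refine (closure_le _).2 ?_
  intro x hx
  obtain ⟨a, ha, hconj⟩ := Group.mem_conjugatesOfSet_iff.1 hx
  obtain ⟨g, rfl⟩ := isConj_iff.1 hconj
  have hcomm : ⁅g, a⁆ ∈ ⁅(⊤ : Subgroup F), normalClosure (H : Set F)⁆ :=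
    commutator_mem_commutator (mem_top g) (le_normalClosure ha)
  have hconj_eq : g * a * g⁻¹ = ⁅g, a⁆ * a := by
    rw [commutatorElement_def]
    group
  rw [hconj_eq, sup_comm]
  exact mul_mem_sup hcomm ha

variable {H N K : Subgroup F} [K.Normal]

theorem surjective_mk'_comp_inclusion_of_le_sup (hHN : H ≤ N) (hN : N ≤ H ⊔ K) :
    Function.Surjective ((QuotientGroup.mk' (K.subgroupOf N)).comp (inclusion hHN)) := by
  rintro ⟨x⟩
  obtain ⟨h, hh, k, hk, hhk⟩ := mem_sup_of_normal_right.1 (hN x.2)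
  refine ⟨⟨h, hh⟩, QuotientGroup.eq.2 ?_⟩
  show ((h : F)⁻¹ * x : F) ∈ K
  rw [← hhk, inv_mul_cancel_left]
  exact hk

theorem ker_mk'_comp_inclusion (hHN : H ≤ N) :
    ((QuotientGroup.mk' (K.subgroupOf N)).comp (inclusion hHN)).ker = K.subgroupOf H := by
  ext x
  simp [mem_subgroupOf]

end Subgroup

open Subgroup in
/-- Let `F` be a group, `R₀ ≤ F` a subgroup and `R` the normal closure of `R₀` in `F`.
The natural homomorphism `R₀ → R/[F,R]`, `r₀ ↦ r₀[F,R]`, is surjective with kernel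
`R₀ ∩ [F,R]`; consequently `R₀/(R₀ ∩ [F,R]) ≅ R/[F,R]`. -/
theorem closure_to_normalClosure_mod_commutator {F : Type*} [Group F] (R₀ : Subgroup F) :
    ∀ φ : ↥R₀ →* (↥(Subgroup.normalClosure (R₀ : Set F)) ⧸
        (⁅(⊤ : Subgroup F), Subgroup.normalClosure (R₀ : Set F)⁆.subgroupOf
          (Subgroup.normalClosure (R₀ : Set F)))),
      (∀ x : ↥R₀, φ x = QuotientGroup.mk ⟨(x : F), Subgroup.le_normalClosure x.2⟩) →
      Function.Surjective φ ∧
      φ.ker = ⁅(⊤ : Subgroup F), Subgroup.normalClosure (R₀ : Set F)⁆.subgroupOf R₀ ∧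
      Nonempty ((↥R₀ ⧸
          ⁅(⊤ : Subgroup F), Subgroup.normalClosure (R₀ : Set F)⁆.subgroupOf R₀) ≃*
        (↥(Subgroup.normalClosure (R₀ : Set F)) ⧸
          ⁅(⊤ : Subgroup F), Subgroup.normalClosure (R₀ : Set F)⁆.subgroupOf
            (Subgroup.normalClosure (R₀ : Set F)))) := by
  intro φ hφ
  have hle : R₀ ≤ normalClosure (R₀ : Set F) := le_normalClosure
  obtain rfl : φ = (QuotientGroup.mk' _).comp (inclusion hle) := MonoidHom.ext hφ
  have hsurj := surjective_mk'_comp_inclusion_of_le_sup hle (normalClosure_le_sup_commutator R₀)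
  have hker := ker_mk'_comp_inclusion (K := ⁅(⊤ : Subgroup F), normalClosure (R₀ : Set F)⁆) hle
  exact ⟨hsurj, hker, ⟨(QuotientGroup.quotientMulEquivOfEq hker.symm).trans
    (QuotientGroup.quotientKerEquivOfSurjective _ hsurj)⟩⟩
end

section
/- Let F be a group, S a subset of F, R₀ the subgroup of F generated by S, and R the normal closure of S in F. Then every coset of [F,R] in R has a representative in R₀; that is, for every g ∈ R there exists r₀ ∈ R₀ such that g⁻¹ r₀ ∈ [F,R]. Equivalently, R = R₀ · [F,R]. -/
open Pointwise

/-- Let `F` be a group, `S ⊆ F`, `R₀` the subgroup generated by `S` and `R` the normal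
closure of `S` in `F`. Then every coset of `[F,R]` in `R` has a representative in `R₀`:
for every `g ∈ R` there is `r₀ ∈ R₀` with `g⁻¹ * r₀ ∈ [F,R]`; equivalently
`R = R₀ ⬝ [F,R]` (as `[F,R]` is normal, the product subgroup is the join `R₀ ⊔ [F,R]`). -/
theorem normalClosure_eq_closure_mul_commutator {F : Type*} [Group F] (S : Set F) :
    (∀ g ∈ Subgroup.normalClosure S, ∃ r₀ ∈ Subgroup.closure S,
      g⁻¹ * r₀ ∈ ⁅(⊤ : Subgroup F), Subgroup.normalClosure S⁆) ∧
    Subgroup.normalClosure S =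
      Subgroup.closure S ⊔ ⁅(⊤ : Subgroup F), Subgroup.normalClosure S⁆ := by
  set R := Subgroup.normalClosure S with hR
  set C := ⁅(⊤ : Subgroup F), R⁆ with hC
  have hCnormal : C.Normal := inferInstance
  have hCle : C ≤ R := by
    rw [hC]
    apply Subgroup.commutator_le.2
    intro g _ r hr
    exact R.mul_mem (Subgroup.normalClosure_normal.conj_mem r hr g) (R.inv_mem hr)
  have hKle : Subgroup.closure S ⊔ C ≤ R :=
    sup_le (Subgroup.closure_le R |>.2 Subgroup.subset_normalClosure) hCle
  have hKnormal : (Subgroup.closure S ⊔ C).Normal := by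
    constructor
    intro x hx g
    have hxR : x ∈ R := hKle hx
    have : g * x * g⁻¹ * x⁻¹ ∈ C := Subgroup.commutator_mem_commutator trivial hxR
    have := (Subgroup.closure S ⊔ C).mul_mem (le_sup_right (a := Subgroup.closure S) this) hx
    simpa using this
  have hRle : R ≤ Subgroup.closure S ⊔ C := by
    rw [hR]
    exact Subgroup.normalClosure_le_normal (Subgroup.subset_closure.trans
      (SetLike.coe_subset_coe.2 le_sup_left))
  have heq : R = Subgroup.closure S ⊔ C := le_antisymm hRle hKle
  refine ⟨?_, heq⟩
  intro g hg
  have : g ∈ ((Subgroup.closure S : Set F) * (C : Set F)) := by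
    rw [← Subgroup.mul_normal]
    exact heq ▸ hg
  obtain ⟨r₀, hr₀, c, hc, rfl⟩ := this
  exact ⟨r₀, hr₀, by simpa using C.inv_mem hc⟩
end

section
/- Let F be a group, y₁, …, y_r elements of F, and R the normal closure of {y₁, …, y_r} in F. Then the commutator subgroup [F,R] equals the subgroup of F generated by the set of all elements (f₁⁻¹ y_j⁻¹ f₁)(f₂⁻¹ y_j f₂) with 1 ≤ j ≤ r and f₁, f₂ ∈ F. -/
/-!
Modulo a normal subgroup `N`, the elements commuting with all of `F` form the normal subgroup
`upperCentralSeriesStep N`, so `[F, R] ≤ N` as soon as every `y_j` is central modulo `N`.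
The generators `(f₁⁻¹ y⁻¹ f₁)(f₂⁻¹ y f₂)` span a normal subgroup `K`, because conjugating
a generator gives another one, and `y` is central modulo `K` since `⁅y⁻¹, g⁆` is the generator
with `f₁ = 1`, `f₂ = g⁻¹`. Conversely each generator is the commutator
`⁅f₁⁻¹ f₂, (f₂⁻¹ y f₂)⁻¹⁆` with an element of `R`.
-/

open scoped commutatorElement

namespace Subgroup

variable {G : Type*} [Group G]

instance upperCentralSeriesStep_normal (N : Subgroup G) [N.Normal] :
    (upperCentralSeriesStep N).Normal := by
  rw [upperCentralSeriesStep_eq_comap_center]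
  infer_instance

theorem commutator_top_right_le_iff_le_upperCentralSeriesStep (H N : Subgroup G) [N.Normal] :
    ⁅H, (⊤ : Subgroup G)⁆ ≤ N ↔ H ≤ upperCentralSeriesStep N := by
  rw [commutator_le]
  simp only [mem_top, forall_const, SetLike.le_def, mem_upperCentralSeriesStep]

theorem commutator_top_normalClosure_le_iff {s : Set G} {N : Subgroup G} [N.Normal] :
    ⁅(⊤ : Subgroup G), normalClosure s⁆ ≤ N ↔ s ⊆ upperCentralSeriesStep N := by
  rw [commutator_comm, commutator_top_right_le_iff_le_upperCentralSeriesStep,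
    normalClosure_subset_iff]

theorem closure_normal_of_conj_mem {s : Set G} (hs : ∀ g : G, ∀ x ∈ s, g * x * g⁻¹ ∈ s) :
    (closure s).Normal := by
  refine normalizer_eq_top_iff.mp (eq_top_iff.mpr fun g _ ↦ normalizer_le_normalizer_closure s ?_)
  refine mem_set_normalizer_iff.mpr fun x ↦ ⟨hs g x, fun hx ↦ ?_⟩
  simpa [mul_assoc] using hs g⁻¹ _ hx

theorem commutator_top_normalClosure_eq_closure (s : Set G) :
    ⁅(⊤ : Subgroup G), normalClosure s⁆ =
      closure {x | ∃ a ∈ s, ∃ f₁ f₂ : G, x = (f₁⁻¹ * a⁻¹ * f₁) * (f₂⁻¹ * a * f₂)} := by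
  set T : Set G := {x | ∃ a ∈ s, ∃ f₁ f₂ : G, x = (f₁⁻¹ * a⁻¹ * f₁) * (f₂⁻¹ * a * f₂)}
  have : (closure T).Normal := closure_normal_of_conj_mem <| by
    rintro g _ ⟨a, ha, f₁, f₂, rfl⟩
    exact ⟨a, ha, f₁ * g⁻¹, f₂ * g⁻¹, by group⟩
  refine le_antisymm (commutator_top_normalClosure_le_iff.mpr fun a ha ↦ ?_) ?_
  · rw [SetLike.mem_coe, ← inv_mem_iff]
    exact fun g ↦ subset_closure ⟨a, ha, 1, g⁻¹, by group⟩
  · rw [closure_le]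
    rintro _ ⟨a, ha, f₁, f₂, rfl⟩
    have hconj : (f₂⁻¹ * a * f₂)⁻¹ ∈ normalClosure s := inv_mem <| by
      simpa using normalClosure_normal.conj_mem a (subset_normalClosure ha) f₂⁻¹
    rw [show (f₁⁻¹ * a⁻¹ * f₁) * (f₂⁻¹ * a * f₂) = ⁅f₁⁻¹ * f₂, (f₂⁻¹ * a * f₂)⁻¹⁆ by group]
    exact commutator_mem_commutator (mem_top _) hconj

end Subgroup

/-- Let `F` be a group, `y₁, …, y_r ∈ F` and `R` the normal closure of `{y₁, …, y_r}` in `F`.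
Then `[F,R]` equals the subgroup generated by all `(f₁⁻¹ y_j⁻¹ f₁)(f₂⁻¹ y_j f₂)`
with `1 ≤ j ≤ r`, `f₁ f₂ ∈ F`. -/
theorem commutator_normalClosure_eq_closure {F : Type*} [Group F] (r : ℕ) (y : Fin r → F) :
    ⁅(⊤ : Subgroup F), Subgroup.normalClosure (Set.range y)⁆ =
      Subgroup.closure
        {x : F | ∃ (j : Fin r) (f₁ f₂ : F),
          x = (f₁⁻¹ * (y j)⁻¹ * f₁) * (f₂⁻¹ * y j * f₂)} := by
  simp only [Subgroup.commutator_top_normalClosure_eq_closure, Set.exists_range_iff]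
end

section
/- Let F be a group, R₀ a finitely generated subgroup of F, and R the normal closure of R₀ in F. Let K denote the image of R₀ ∩ [F,R] under the abelianization map R₀ → R₀ᵃᵇ = R₀/[R₀,R₀]. Then the rank of the finitely generated abelian group R/[F,R] equals rank(R₀ᵃᵇ) − rank(K). In particular, if R₀ᵃᵇ is free abelian of rank r and rank(K) = k, then rank(R/[F,R]) = r − k. -/
/-- The (torsion-free) rank of a group `A`: the rank of the `ℤ`-module `Aᵃᵇ`
(for an abelian group `A` this is the usual rank `dim_ℚ (A ⊗_ℤ ℚ)`). -/
noncomputable def groupRank (A : Type*) [Group A] : ℕ :=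
  Module.finrank ℤ (Additive (Abelianization A))

/-!
Put `R = ⟨⟨R₀⟩⟩` and `N = [F, R]`. Since `g x g⁻¹ = [g, x] x`, the subgroup `R₀ N` is normal,
so it equals `R`, and the second isomorphism theorem gives `R / N ≅ R₀ / (R₀ ∩ N)`. As
`[R₀, R₀] ≤ R₀ ∩ N`, this is the quotient of `R₀ᵃᵇ` by the image `K` of `R₀ ∩ N`, and rank is
additive on the finitely generated abelian group `R₀ᵃᵇ`.
-/

lemma groupRank_congr {A B : Type*} [Group A] [Group B] (e : A ≃* B) :
    groupRank A = groupRank B :=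
  (MulEquiv.toAdditive e.abelianizationCongr).toIntLinearEquiv.finrank_eq

lemma groupRank_eq_finrank (A : Type*) [CommGroup A] :
    groupRank A = Module.finrank ℤ (Additive A) :=
  (MulEquiv.toAdditive Abelianization.equivOfComm.symm).toIntLinearEquiv.finrank_eq

lemma groupRank_quotient {A : Type*} [CommGroup A] [Module.Finite ℤ (Additive A)]
    (K : Subgroup A) : groupRank (A ⧸ K) = groupRank A - groupRank K := by
  simp only [groupRank_eq_finrank]
  -- `Additive (A ⧸ K)` and `Additive K` are definitionally the module quotient and submodule.
  exact Submodule.finrank_quotient (AddSubgroup.toIntSubmodule K.toAddSubgroup)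

lemma groupRank_quotient_of_commutator_le {G : Type*} [Group G] [Group.FG G] (M : Subgroup G)
    [M.Normal] (hM : commutator G ≤ M) :
    groupRank (G ⧸ M) = groupRank G - groupRank (M.map (Abelianization.of (G := G))) := by
  have : Group.FG (Abelianization G) := inferInstanceAs (Group.FG (G ⧸ commutator G))
  have : Module.Finite ℤ (Additive (Abelianization G)) :=
    Module.Finite.iff_addGroup_fg.mpr inferInstance
  rw [← groupRank_congr (QuotientGroup.quotientQuotientEquivQuotient _ M hM),
    ← show groupRank (Abelianization G) = groupRank G from groupRank_eq_finrank _]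
  exact groupRank_quotient (M.map Abelianization.of)

namespace Subgroup

variable {G : Type*} [Group G]

open scoped commutatorElement in
lemma normal_sup_commutator_top {H K : Subgroup G} [K.Normal] (hHK : H ≤ K) :
    (H ⊔ ⁅(⊤ : Subgroup G), K⁆).Normal where
  conj_mem x hx g := by
    have hxK : x ∈ K := sup_le hHK (commutator_le_right ⊤ K) hx
    rw [show g * x * g⁻¹ = ⁅g, x⁆ * x by group]
    exact mul_mem (mem_sup_right (commutator_mem_commutator (mem_top g) hxK)) hx

lemma sup_commutator_top_normalClosure (H : Subgroup G) :
    H ⊔ ⁅(⊤ : Subgroup G), normalClosure (H : Set G)⁆ = normalClosure (H : Set G) := by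
  have := normal_sup_commutator_top (le_normalClosure (H := H))
  exact le_antisymm (sup_le le_normalClosure (commutator_le_right _ _))
    (normalClosure_le_normal fun _ hx => mem_sup_left hx)

lemma commutator_le_subgroupOf_commutator_top {H K : Subgroup G} (hHK : H ≤ K) :
    _root_.commutator H ≤ ⁅(⊤ : Subgroup G), K⁆.subgroupOf H :=
  map_le_iff_le_comap.mp (H.map_subtype_commutator ▸ commutator_mono le_top hHK)

end Subgroup

/-- Let `F` be a group, `R₀` a finitely generated subgroup, `R` the normal closure of
`R₀` in `F` and `K` the image of `R₀ ∩ [F,R]` under the abelianization map `R₀ → R₀ᵃᵇ`.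
Then `rank (R/[F,R]) = rank R₀ᵃᵇ - rank K`. -/
theorem rank_normalClosure_mod_commutator {F : Type*} [Group F] (R₀ : Subgroup F)
    (hfg : Group.FG ↥R₀) :
    groupRank (↥(Subgroup.normalClosure (R₀ : Set F)) ⧸
        (⁅(⊤ : Subgroup F), Subgroup.normalClosure (R₀ : Set F)⁆.subgroupOf
          (Subgroup.normalClosure (R₀ : Set F)))) =
      groupRank ↥R₀ -
        groupRank ↥((⁅(⊤ : Subgroup F), Subgroup.normalClosure (R₀ : Set F)⁆.subgroupOf
          R₀).map (Abelianization.of (G := ↥R₀))) := by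
  set R := Subgroup.normalClosure (R₀ : Set F)
  set N := ⁅(⊤ : Subgroup F), R⁆
  have : N.Normal := Subgroup.commutator_normal ⊤ R
  have second_iso := QuotientGroup.quotientInfEquivProdNormalQuotient R₀ N
  rw [Subgroup.sup_commutator_top_normalClosure] at second_iso
  rw [← groupRank_congr second_iso]
  exact groupRank_quotient_of_commutator_le _
    (Subgroup.commutator_le_subgroupOf_commutator_top Subgroup.le_normalClosure)
end
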